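/- arXiv:0903.4265 — 3 statements merged into one kernel-verified Lean document; each statement's English description precedes it below -/
import Mathlib

section
/- Let l > 0 and m ≥ 0 be real numbers, φ : ℝ → ℝ a smooth compactly supported function, and N ≥ 1 an integer. Then for every λ ∈ ℂ with Re λ > -(m+1)/l one has F₊(φ)(λ) = ∫₀¹ g_N(λ,t) φ^{(N)}(t) dt + ∫₁^{+∞} t^{lλ+m} φ(t) dt + Σ_{r=1}^{N} φ^{(r-1)}(0) / ((r-1)! · (lλ+m+r)), where g_N(λ,t) = (1/(N-1)!) ∫_t^1 x^{lλ+m} (x-t)^{N-1} dx for 0 < t ≤ 1. -/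
open MeasureTheory Filter Set
open scoped Topology

/-- `F₊(φ)(λ) = ∫₀^∞ x^(lλ+m) φ(x) dx`. -/
noncomputable def Fplus (l m : ℝ) (φ : ℝ → ℝ) (lam : ℂ) : ℂ :=
  ∫ x in Ioi (0 : ℝ), (x : ℂ) ^ ((l : ℂ) * lam + (m : ℂ)) * (φ x : ℂ)

/-- `g_N(λ,t) = (1/(N-1)!) ∫_t^1 x^(lλ+m) (x-t)^(N-1) dx` for `0 < t ≤ 1`. -/
noncomputable def gN (l m : ℝ) (N : ℕ) (lam : ℂ) (t : ℝ) : ℂ :=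
  (1 / (Nat.factorial (N - 1) : ℂ)) *
    ∫ x in Ioc t (1 : ℝ), (x : ℂ) ^ ((l : ℂ) * lam + (m : ℂ)) * ((x : ℂ) - (t : ℂ)) ^ (N - 1)



theorem taylorInt (φ : ℝ → ℝ) (hφ : ContDiff ℝ (⊤ : ℕ∞) φ) (n : ℕ) (x : ℝ) :
    ∫ t in (0:ℝ)..x, ((x - t) ^ n / n.factorial) * iteratedDeriv (n + 1) φ t
      = φ x - ∑ r ∈ Finset.range (n + 1), iteratedDeriv r φ 0 * x ^ r / r.factorial := by
  have hD : ∀ k : ℕ, Continuous (iteratedDeriv k φ) := fun k =>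
    hφ.continuous_iteratedDeriv k (by exact_mod_cast le_top)
  have hDd : ∀ (k : ℕ) (t : ℝ), HasDerivAt (iteratedDeriv k φ) (iteratedDeriv (k+1) φ t) t := by
    intro k t
    rw [iteratedDeriv_succ]
    exact ((hφ.differentiable_iteratedDeriv k (by exact_mod_cast lt_top_iff_ne_top.2 (by simp))).differentiableAt).hasDerivAt
  induction n with
  | zero =>
      simp only [pow_zero, Nat.factorial_zero, Nat.cast_one, div_one, one_mul,
        Finset.range_one, Finset.sum_singleton, iteratedDeriv_zero, pow_zero, mul_one, div_one]
      rw [show iteratedDeriv 1 φ = deriv φ from iteratedDeriv_one]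
      have := intervalIntegral.integral_deriv_eq_sub
        (f := φ) (a := 0) (b := x)
        (fun t _ => (hφ.differentiable (by simp)).differentiableAt)
        ((hφ.continuous_deriv (by simp)).intervalIntegrable 0 x)
      simpa using this
  | succ n ih =>
      -- u t = -(x-t)^(n+1)/(n+1)! * iteratedDeriv (n+1) φ t
      set u : ℝ → ℝ := fun t => -((x - t) ^ (n+1) / (n+1).factorial) * iteratedDeriv (n+1) φ t with hu
      have hderiv : ∀ t : ℝ, HasDerivAt u
          (((x - t) ^ n / n.factorial) * iteratedDeriv (n+1) φ t
            - ((x - t) ^ (n+1) / (n+1).factorial) * iteratedDeriv (n+2) φ t) t := by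
        intro t
        have h1 : HasDerivAt (fun t : ℝ => -((x - t) ^ (n+1) / (n+1).factorial))
            ((x - t) ^ n / n.factorial) t := by
          have : HasDerivAt (fun t : ℝ => (x - t) ^ (n+1))
              (((n:ℝ)+1) * (x - t) ^ n * (-1)) t :=
            (((hasDerivAt_id t).const_sub x).pow (n+1)).congr_deriv (by push_cast; simp [id]; try ring)
          have := (this.div_const ((n+1).factorial : ℝ)).neg
          refine this.congr_deriv ?_
          have hfac : ((n+1).factorial : ℝ) = ((n:ℝ)+1) * n.factorial := by
            push_cast [Nat.factorial_succ]; ring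
          rw [hfac]
          have h0 : (n.factorial : ℝ) ≠ 0 := Nat.cast_ne_zero.2 n.factorial_ne_zero
          field_simp
        have := h1.mul (hDd (n+1) t)
        refine this.congr_deriv ?_
        ring_nf
      have hFTC : ∫ t in (0:ℝ)..x, (((x - t) ^ n / n.factorial) * iteratedDeriv (n+1) φ t
            - ((x - t) ^ (n+1) / (n+1).factorial) * iteratedDeriv (n+2) φ t)
          = u x - u 0 := by
        apply intervalIntegral.integral_eq_sub_of_hasDerivAt (fun t _ => hderiv t)
        apply Continuous.intervalIntegrable
        fun_prop
      have hint1 : IntervalIntegrable (fun t => ((x - t) ^ n / n.factorial) * iteratedDeriv (n+1) φ t) volume 0 x := by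
        apply Continuous.intervalIntegrable; fun_prop
      have hint2 : IntervalIntegrable (fun t => ((x - t) ^ (n+1) / (n+1).factorial) * iteratedDeriv (n+2) φ t) volume 0 x := by
        apply Continuous.intervalIntegrable; fun_prop
      rw [intervalIntegral.integral_sub hint1 hint2, ih] at hFTC
      have hux : u x = 0 := by simp [hu]
      have hu0 : u 0 = -(x ^ (n+1) / (n+1).factorial) * iteratedDeriv (n+1) φ 0 := by simp [hu]
      rw [hux, hu0] at hFTC
      have : ∫ t in (0:ℝ)..x, ((x - t) ^ (n+1) / (n+1).factorial) * iteratedDeriv (n+1+1) φ t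
          = (φ x - ∑ r ∈ Finset.range (n + 1), iteratedDeriv r φ 0 * x ^ r / r.factorial)
            - x ^ (n+1) / (n+1).factorial * iteratedDeriv (n+1) φ 0 := by
        have := hFTC
        linarith [hFTC]
      rw [this]
      conv_rhs => rw [Finset.sum_range_succ]
      ring

lemma meas_ofReal_cpow (s : ℂ) : Measurable fun x : ℝ => (x : ℂ) ^ s := by
  have : (fun x : ℝ => (x : ℂ) ^ s) = fun x : ℝ =>
      if (x : ℂ) = 0 then (if s = 0 then 1 else 0) else Complex.exp (Complex.log x * s) := by
    funext x; rw [Complex.cpow_def]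
  rw [this]
  apply Measurable.ite
  · exact measurableSet_eq_fun (Complex.measurable_ofReal) measurable_const
  · exact measurable_const
  · exact Complex.measurable_exp.comp ((Complex.measurable_log.comp Complex.measurable_ofReal).mul measurable_const)

lemma fubini_swap (s : ℂ) (hs : -1 < s.re) (n : ℕ) (ψ : ℝ → ℝ) (hψ : Continuous ψ) :
    ∫ t in Ioc (0:ℝ) 1, (∫ x in Ioc t (1:ℝ), (x:ℂ)^s * ((x:ℂ) - (t:ℂ))^n) * (ψ t : ℂ)
      = ∫ x in Ioc (0:ℝ) 1, (x:ℂ)^s * ∫ t in Ioo (0:ℝ) x, ((x:ℂ) - (t:ℂ))^n * (ψ t : ℂ) := by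
  set g : ℝ → ℝ → ℂ := fun t x => (x:ℂ)^s * ((x:ℂ) - (t:ℂ))^n * (ψ t : ℂ) with hg
  set T : Set (ℝ × ℝ) := {p | 0 < p.1 ∧ p.1 < p.2 ∧ p.2 ≤ 1} with hT
  set F : ℝ → ℝ → ℂ := fun t x => T.indicator (fun p => g p.1 p.2) (t, x) with hF
  have hTmeas : MeasurableSet T := by
    apply MeasurableSet.inter (measurableSet_lt measurable_const measurable_fst)
    exact MeasurableSet.inter (measurableSet_lt measurable_fst measurable_snd)
      (measurableSet_le measurable_snd measurable_const)
  have hgmeas : Measurable (fun p : ℝ × ℝ => g p.1 p.2) := by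
    apply Measurable.mul
    apply Measurable.mul
    · exact (meas_ofReal_cpow s).comp measurable_snd
    · exact ((Complex.measurable_ofReal.comp measurable_snd).sub
        (Complex.measurable_ofReal.comp measurable_fst)).pow measurable_const
    · exact Complex.measurable_ofReal.comp (hψ.measurable.comp measurable_fst)
  have hFmeas : AEStronglyMeasurable (fun p : ℝ × ℝ => F p.1 p.2)
      ((volume : Measure ℝ).prod volume) := by
    have : (fun p : ℝ × ℝ => F p.1 p.2) = T.indicator (fun p => g p.1 p.2) := rfl
    rw [this]
    exact (hgmeas.indicator hTmeas).aestronglyMeasurable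
  have hslice1 : ∀ t x : ℝ, F t x
      = if 0 < t then (Ioc t 1).indicator (fun x => g t x) x else 0 := by
    intro t x
    simp only [hF, indicator_apply, hT, mem_setOf_eq, mem_Ioc]
    split_ifs <;> tauto
  have hslice2 : ∀ x t : ℝ, F t x
      = if x ≤ 1 then (Ioo 0 x).indicator (fun t => g t x) t else 0 := by
    intro x t
    simp only [hF, indicator_apply, hT, mem_setOf_eq, mem_Ioo]
    split_ifs <;> tauto
  have hcontx : ∀ t : ℝ, 0 < t → ContinuousOn (fun x => g t x) (Icc t 1) := by
    intro t ht
    apply ContinuousOn.mul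
    apply ContinuousOn.mul
    · intro x hx
      exact (Complex.continuousAt_ofReal_cpow_const x s
        (Or.inr (ne_of_gt (lt_of_lt_of_le ht hx.1)))).continuousWithinAt
    · fun_prop
    · fun_prop
  have hslice_int : ∀ t : ℝ, Integrable (fun x => F t x) := by
    intro t
    simp only [hslice1]
    by_cases h : 0 < t
    · simp only [if_pos h]
      rw [integrable_indicator_iff measurableSet_Ioc]
      exact ((hcontx t h).integrableOn_Icc).mono_set Ioc_subset_Icc_self
    · simp only [if_neg h]; exact integrable_zero _ _ _
  obtain ⟨M, hM⟩ := (isCompact_Icc (a := (0:ℝ)) (b := 1)).exists_bound_of_continuousOn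
    hψ.continuousOn
  have hM0 : 0 ≤ M := le_trans (norm_nonneg _) (hM 0 ⟨le_refl 0, zero_le_one⟩)
  have hrpow_int : IntegrableOn (fun x : ℝ => M * x ^ s.re) (Ioc (0:ℝ) 1) := by
    have : IntervalIntegrable (fun x : ℝ => x ^ s.re) volume 0 1 :=
      intervalIntegral.intervalIntegrable_rpow' hs
    rw [intervalIntegrable_iff_integrableOn_Ioc_of_le zero_le_one] at this
    exact this.const_mul M
  set C : ℝ := ∫ x in Ioc (0:ℝ) 1, M * x ^ s.re with hC
  have hgbound : ∀ t ∈ Ioc (0:ℝ) 1, ∀ x ∈ Ioc t 1, ‖g t x‖ ≤ M * x ^ s.re := by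
    intro t ht x hx
    have hx0 : 0 < x := lt_trans ht.1 hx.1
    rw [hg]
    simp only [norm_mul, Complex.norm_cpow_eq_rpow_re_of_pos hx0]
    rw [mul_comm M _, mul_assoc]
    apply mul_le_mul_of_nonneg_left _ (Real.rpow_nonneg hx0.le _)
    have h1 : ‖((x:ℂ) - (t:ℂ)) ^ n‖ ≤ 1 := by
      rw [norm_pow]
      apply pow_le_one₀ (norm_nonneg _)
      rw [show (x:ℂ) - (t:ℂ) = ((x - t : ℝ) : ℂ) by push_cast; ring, Complex.norm_real, Real.norm_eq_abs]
      rw [abs_of_nonneg (by linarith [hx.1])]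
      linarith [ht.1, hx.2]
    have h2 : ‖((ψ t : ℝ) : ℂ)‖ ≤ M := by
      rw [Complex.norm_real]
      exact hM t ⟨ht.1.le, ht.2⟩
    calc ‖((x:ℂ) - (t:ℂ)) ^ n‖ * ‖((ψ t : ℝ) : ℂ)‖
        ≤ 1 * M := mul_le_mul h1 h2 (norm_nonneg _) one_pos.le
      _ = M := one_mul M
  have hnorm_bound : ∀ t : ℝ, ∫ x, ‖F t x‖ ≤ (Ioc (0:ℝ) 1).indicator (fun _ => C) t := by
    intro t
    by_cases ht : t ∈ Ioc (0:ℝ) 1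
    · rw [indicator_of_mem ht, hC]
      calc ∫ x, ‖F t x‖
          = ∫ x in Ioc t 1, ‖g t x‖ := by
            rw [← MeasureTheory.integral_indicator measurableSet_Ioc]
            congr 1; funext x
            rw [hslice1 t x, if_pos ht.1]
            exact (norm_indicator_eq_indicator_norm _ x)
        _ ≤ ∫ x in Ioc t 1, M * x ^ s.re := by
            apply setIntegral_mono_on
            · rw [← integrable_indicator_iff measurableSet_Ioc]
              have := (hslice_int t).norm
              apply this.congr
              filter_upwards with x
              rw [hslice1 t x, if_pos ht.1]
              exact norm_indicator_eq_indicator_norm _ x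
            · exact hrpow_int.mono_set (Ioc_subset_Ioc_left ht.1.le)
            · exact measurableSet_Ioc
            · exact hgbound t ht
        _ ≤ ∫ x in Ioc (0:ℝ) 1, M * x ^ s.re := by
            apply setIntegral_mono_set hrpow_int
            · filter_upwards [ae_restrict_mem measurableSet_Ioc] with x hx
              exact mul_nonneg hM0 (Real.rpow_nonneg hx.1.le _)
            · exact HasSubset.Subset.eventuallyLE (Ioc_subset_Ioc_left ht.1.le)
    · rw [indicator_of_notMem ht]
      have hz : ∀ x, F t x = 0 := by
        intro x
        rw [hslice1 t x]
        split_ifs with h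
        · have h1 : (1:ℝ) < t := by
            by_contra h2
            exact ht ⟨h, not_lt.1 h2⟩
          rw [Ioc_eq_empty (not_lt.2 h1.le)]
          simp
        · rfl
      simp [hz]
  have hInt : Integrable (fun p : ℝ × ℝ => F p.1 p.2) ((volume : Measure ℝ).prod volume) := by
    rw [MeasureTheory.integrable_prod_iff hFmeas]
    constructor
    · filter_upwards with t; exact hslice_int t
    · apply Integrable.mono' ((integrable_indicator_iff measurableSet_Ioc).2
        (integrableOn_const (s := Ioc (0:ℝ) 1) (C := C) (by simp)))
      · exact hFmeas.norm.integral_prod_right'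
      · filter_upwards with t
        rw [Real.norm_of_nonneg (integral_nonneg (fun x => norm_nonneg _))]
        exact hnorm_bound t
  have hswap : (∫ t, ∫ x, F t x) = ∫ x, ∫ t, F t x := by
    apply MeasureTheory.integral_integral_swap
    rw [Function.uncurry_def]
    exact hInt
  -- identify LHS
  have hLHS : (∫ t, ∫ x, F t x)
      = ∫ t in Ioc (0:ℝ) 1, (∫ x in Ioc t (1:ℝ), (x:ℂ)^s * ((x:ℂ) - (t:ℂ))^n) * (ψ t : ℂ) := by
    rw [← MeasureTheory.integral_indicator measurableSet_Ioc]
    congr 1; funext t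
    by_cases ht : t ∈ Ioc (0:ℝ) 1
    · rw [indicator_of_mem ht]
      have : ∀ x, F t x = (Ioc t 1).indicator (fun x => g t x) x := fun x => by
        rw [hslice1 t x, if_pos ht.1]
      simp only [this]
      rw [MeasureTheory.integral_indicator measurableSet_Ioc]
      rw [hg]
      exact MeasureTheory.integral_mul_const _ _
    · rw [indicator_of_notMem ht]
      have hz : ∀ x, F t x = 0 := by
        intro x
        rw [hslice1 t x]
        split_ifs with h
        · have h1 : (1:ℝ) < t := by
            by_contra h2
            exact ht ⟨h, not_lt.1 h2⟩
          rw [Ioc_eq_empty (not_lt.2 h1.le)]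
          simp
        · rfl
      simp [hz]
  -- identify RHS
  have hRHS : (∫ x, ∫ t, F t x)
      = ∫ x in Ioc (0:ℝ) 1, (x:ℂ)^s * ∫ t in Ioo (0:ℝ) x, ((x:ℂ) - (t:ℂ))^n * (ψ t : ℂ) := by
    rw [← MeasureTheory.integral_indicator measurableSet_Ioc]
    congr 1; funext x
    by_cases hx : x ∈ Ioc (0:ℝ) 1
    · rw [indicator_of_mem hx]
      have : ∀ t, F t x = (Ioo 0 x).indicator (fun t => g t x) t := fun t => by
        rw [hslice2 x t, if_pos hx.2]
      simp only [this]
      rw [MeasureTheory.integral_indicator measurableSet_Ioo]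
      rw [hg]
      simp only [mul_assoc]
      exact MeasureTheory.integral_const_mul _ _
    · rw [indicator_of_notMem hx]
      rcases not_and_or.1 hx with h | h
      · push_neg at h
        have hz : ∀ t, F t x = 0 := by
          intro t
          rw [hslice2 x t]
          split_ifs with h'
          · rw [Ioo_eq_empty (by linarith)]
            simp
          · rfl
        simp [hz]
      · have hz : ∀ t, F t x = 0 := by
          intro t
          rw [hslice2 x t, if_neg h]
        simp [hz]
  rw [← hLHS, ← hRHS, hswap]

lemma integrableOn_cpow_mul (s : ℂ) (hs : -1 < s.re) (h : ℝ → ℝ) (hh : Continuous h) :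
    IntegrableOn (fun x : ℝ => (x : ℂ) ^ s * (h x : ℂ)) (Ioc (0:ℝ) 1) := by
  obtain ⟨C, hC⟩ := (isCompact_Icc (a := (0:ℝ)) (b := 1)).exists_bound_of_continuousOn hh.continuousOn
  apply Integrable.mono' (g := fun x : ℝ => C * x ^ s.re)
  · have : IntervalIntegrable (fun x : ℝ => x ^ s.re) volume 0 1 :=
      intervalIntegral.intervalIntegrable_rpow' hs
    rw [intervalIntegrable_iff_integrableOn_Ioc_of_le zero_le_one] at this
    exact this.const_mul C
  · exact (((meas_ofReal_cpow s).mul (Complex.measurable_ofReal.comp hh.measurable)).aestronglyMeasurable).restrict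
  · rw [ae_restrict_iff' measurableSet_Ioc]
    filter_upwards with x hx
    rw [norm_mul, Complex.norm_cpow_eq_rpow_re_of_pos hx.1]
    rw [mul_comm]
    apply mul_le_mul_of_nonneg_right _ (Real.rpow_nonneg hx.1.le _)
    simpa using hC x ⟨hx.1.le, hx.2⟩

lemma cpow_integral_Ioc (s : ℂ) (hs : -1 < s.re) (r : ℕ) :
    ∫ x in Ioc (0:ℝ) 1, (x : ℂ) ^ s * ((x:ℝ) ^ r : ℝ) = 1 / (s + r + 1) := by
  have h1 : ∀ x ∈ Ioc (0:ℝ) 1, (x : ℂ) ^ s * ((x:ℝ) ^ r : ℝ) = (x : ℂ) ^ (s + r) := by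
    intro x hx
    rw [Complex.cpow_add _ _ (by exact_mod_cast hx.1.ne'), Complex.cpow_natCast]
    push_cast; ring
  rw [setIntegral_congr_fun measurableSet_Ioc h1,
    ← intervalIntegral.integral_of_le zero_le_one,
    integral_cpow (Or.inl (by simp [Complex.add_re]; linarith))]
  have hne : s + (r:ℂ) + 1 ≠ 0 := by
    intro h
    have := congrArg Complex.re h
    simp [Complex.add_re] at this
    linarith
  norm_num
  rw [Complex.zero_cpow hne, sub_zero, one_div]

lemma aux_main (s : ℂ) (hs : -1 < s.re) (φ : ℝ → ℝ) (hφ : ContDiff ℝ (⊤ : ℕ∞) φ) (n : ℕ) :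
    (∫ t in Ioc (0:ℝ) 1, ((1 / (n.factorial : ℂ)) *
        ∫ x in Ioc t (1:ℝ), (x:ℂ)^s * ((x:ℂ) - (t:ℂ))^n) * ((iteratedDeriv (n+1) φ t : ℝ) : ℂ))
      = (∫ x in Ioc (0:ℝ) 1, (x:ℂ)^s * (φ x : ℂ))
        - ∑ r ∈ Finset.range (n+1),
            ((iteratedDeriv r φ 0 : ℝ) : ℂ) / ((r.factorial : ℂ) * (s + (r:ℂ) + 1)) := by
  have hψ : Continuous (iteratedDeriv (n+1) φ) :=
    hφ.continuous_iteratedDeriv (n+1) (by exact_mod_cast le_top)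
  have hfacne : (n.factorial : ℂ) ≠ 0 := Nat.cast_ne_zero.2 n.factorial_ne_zero
  set P : ℝ → ℝ := fun x => ∑ r ∈ Finset.range (n+1), iteratedDeriv r φ 0 * x ^ r / r.factorial
    with hP
  have hPcont : Continuous P := by
    apply continuous_finset_sum
    intro r _
    fun_prop
  -- step 1 : pull out 1/n!
  have step1 : (∫ t in Ioc (0:ℝ) 1, ((1 / (n.factorial : ℂ)) *
        ∫ x in Ioc t (1:ℝ), (x:ℂ)^s * ((x:ℂ) - (t:ℂ))^n) * ((iteratedDeriv (n+1) φ t : ℝ) : ℂ))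
      = (1 / (n.factorial : ℂ)) * ∫ t in Ioc (0:ℝ) 1,
          (∫ x in Ioc t (1:ℝ), (x:ℂ)^s * ((x:ℂ) - (t:ℂ))^n) * ((iteratedDeriv (n+1) φ t : ℝ) : ℂ) := by
    rw [← MeasureTheory.integral_const_mul]
    congr 1; funext t; ring
  -- inner computation
  have hinner : ∀ x ∈ Ioc (0:ℝ) 1,
      (x:ℂ)^s * ∫ t in Ioo (0:ℝ) x, ((x:ℂ) - (t:ℂ))^n * ((iteratedDeriv (n+1) φ t : ℝ) : ℂ)
        = (n.factorial : ℂ) * ((x:ℂ)^s * (((φ x - P x : ℝ)) : ℂ)) := by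
    intro x hx
    have h1 : (∫ t in Ioo (0:ℝ) x, ((x:ℂ) - (t:ℂ))^n * ((iteratedDeriv (n+1) φ t : ℝ) : ℂ))
        = ∫ t in (0:ℝ)..x, (((x - t)^n * iteratedDeriv (n+1) φ t : ℝ) : ℂ) := by
      rw [intervalIntegral.integral_of_le hx.1.le, MeasureTheory.integral_Ioc_eq_integral_Ioo]
      congr 1; funext t; push_cast; ring
    rw [h1, intervalIntegral.integral_ofReal]
    have h2 : (∫ t in (0:ℝ)..x, (x - t)^n * iteratedDeriv (n+1) φ t)
        = (n.factorial : ℝ) * (φ x - P x) := by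
      rw [← taylorInt φ hφ n x, ← intervalIntegral.integral_const_mul]
      congr 1; funext t
      have : (n.factorial : ℝ) ≠ 0 := Nat.cast_ne_zero.2 n.factorial_ne_zero
      field_simp
    rw [h2]
    push_cast
    ring
  rw [step1, fubini_swap s hs n _ hψ,
    MeasureTheory.setIntegral_congr_fun measurableSet_Ioc hinner,
    MeasureTheory.integral_const_mul, ← mul_assoc, one_div,
    inv_mul_cancel₀ hfacne, one_mul]
  -- now: ∫ x in Ioc 0 1, x^s * ((φ x - P x : ℝ) : ℂ) = ∫ x^s φ - Σ ...
  have hsub : ∀ x : ℝ, (x:ℂ)^s * (((φ x - P x : ℝ)) : ℂ)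
      = (x:ℂ)^s * (φ x : ℂ) - (x:ℂ)^s * ((P x : ℝ) : ℂ) := by
    intro x; push_cast; ring
  rw [show (fun x : ℝ => (x:ℂ)^s * (((φ x - P x : ℝ)) : ℂ))
      = fun x : ℝ => (x:ℂ)^s * (φ x : ℂ) - (x:ℂ)^s * ((P x : ℝ) : ℂ) from funext hsub]
  rw [MeasureTheory.integral_sub (integrableOn_cpow_mul s hs φ hφ.continuous)
    (integrableOn_cpow_mul s hs P hPcont)]
  congr 1
  -- ∫ x^s * P x = Σ
  have hterm : ∀ r : ℕ, (fun x : ℝ => (x:ℂ)^s * ((iteratedDeriv r φ 0 * x ^ r / r.factorial : ℝ) : ℂ))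
      = fun x : ℝ => (((iteratedDeriv r φ 0 : ℝ) : ℂ) / (r.factorial : ℂ)) * ((x:ℂ)^s * ((x ^ r : ℝ) : ℂ)) := by
    intro r; funext x; push_cast; ring
  have hPexp : (fun x : ℝ => (x:ℂ)^s * ((P x : ℝ) : ℂ))
      = fun x : ℝ => ∑ r ∈ Finset.range (n+1),
          (((iteratedDeriv r φ 0 : ℝ) : ℂ) / (r.factorial : ℂ)) * ((x:ℂ)^s * ((x ^ r : ℝ) : ℂ)) := by
    funext x
    rw [hP]
    push_cast
    rw [Finset.mul_sum]
    apply Finset.sum_congr rfl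
    intro r _
    ring
  rw [hPexp, MeasureTheory.integral_finset_sum]
  · apply Finset.sum_congr rfl
    intro r _
    rw [MeasureTheory.integral_const_mul, cpow_integral_Ioc s hs r]
    rw [div_mul_div_comm, mul_one]
  · intro r _
    have := (integrableOn_cpow_mul s hs
      (fun x => iteratedDeriv r φ 0 * x ^ r / r.factorial) (by fun_prop))
    apply this.congr_fun _ measurableSet_Ioc
    intro x _
    rw [← hterm r]

/-- For `l > 0`, `m ≥ 0`, `φ` smooth compactly supported and `N ≥ 1`, for every `λ` with
`Re λ > -(m+1)/l` one has
`F₊(φ)(λ) = ∫₀¹ g_N(λ,t) φ^(N)(t) dt + ∫₁^∞ t^(lλ+m) φ(t) dt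
    + Σ_{r=1}^N φ^(r-1)(0)/((r-1)!·(lλ+m+r))`. -/
theorem stmt_1 (l m : ℝ) (hl : 0 < l) (hm : 0 ≤ m) (φ : ℝ → ℝ)
    (hφ : ContDiff ℝ (⊤ : ℕ∞) φ) (hφc : HasCompactSupport φ) (N : ℕ) (hN : 1 ≤ N) :
    ∀ lam : ℂ, -(m + 1) / l < lam.re →
      Fplus l m φ lam =
        (∫ t in Ioc (0 : ℝ) 1, gN l m N lam t * ((iteratedDeriv N φ t : ℝ) : ℂ)) +
        (∫ t in Ioi (1 : ℝ), (t : ℂ) ^ ((l : ℂ) * lam + (m : ℂ)) * (φ t : ℂ)) +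
        ∑ r ∈ Finset.Icc 1 N,
          ((iteratedDeriv (r - 1) φ 0 : ℝ) : ℂ) /
            ((Nat.factorial (r - 1) : ℂ) * ((l : ℂ) * lam + (m : ℂ) + (r : ℂ))) := by
  intro lam hlam
  obtain ⟨n, rfl⟩ : ∃ n, N = n + 1 := ⟨N - 1, (Nat.succ_pred_eq_of_pos hN).symm⟩
  set s : ℂ := (l : ℂ) * lam + (m : ℂ) with hsdef
  have hsre : s.re = l * lam.re + m := by
    simp [hsdef, Complex.add_re, Complex.mul_re]
  have hs : -1 < s.re := by
    rw [hsre]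
    have := (div_lt_iff₀ hl).1 hlam
    nlinarith
  -- integrability on (0,1]
  have hI1 : IntegrableOn (fun x : ℝ => (x:ℂ)^s * (φ x : ℂ)) (Ioc (0:ℝ) 1) :=
    integrableOn_cpow_mul s hs φ hφ.continuous
  -- integrability on (1,∞)
  have hI2 : IntegrableOn (fun x : ℝ => (x:ℂ)^s * (φ x : ℂ)) (Ioi (1:ℝ)) := by
    obtain ⟨A, hA⟩ := hφc.isBounded.subset_closedBall (0:ℝ)
    set B : ℝ := max A 1 with hB
    rw [← Ioc_union_Ioi_eq_Ioi (le_max_right A 1)]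
    apply MeasureTheory.IntegrableOn.union
    · apply (ContinuousOn.integrableOn_Icc ?_).mono_set Ioc_subset_Icc_self
      apply ContinuousOn.mul ?_ (Complex.continuous_ofReal.comp hφ.continuous).continuousOn
      intro x hx
      exact (Complex.continuousAt_ofReal_cpow_const x s
        (Or.inr (by exact ne_of_gt (lt_of_lt_of_le one_pos hx.1)))).continuousWithinAt
    · have hz : ∀ x ∈ Ioi B, (x:ℂ)^s * (φ x : ℂ) = 0 := by
        intro x hx
        have : φ x = 0 := by
          apply image_eq_zero_of_notMem_tsupport
          intro hmem
          have := hA hmem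
          rw [Real.closedBall_eq_Icc] at this
          have : x ≤ A := by simpa using this.2
          have : A < x := lt_of_le_of_lt (le_max_left A 1) hx
          linarith
        simp [this]
      exact (integrableOn_zero : IntegrableOn (fun _ : ℝ => (0:ℂ)) _ _).congr_fun
        (fun x hx => (hz x hx).symm) measurableSet_Ioi
  -- split
  have hsplit : Fplus l m φ lam
      = (∫ x in Ioc (0:ℝ) 1, (x:ℂ)^s * (φ x : ℂ)) + ∫ x in Ioi (1:ℝ), (x:ℂ)^s * (φ x : ℂ) := by
    rw [Fplus, ← hsdef, ← MeasureTheory.setIntegral_union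
      (Ioc_disjoint_Ioi le_rfl) measurableSet_Ioi hI1 hI2,
      Ioc_union_Ioi_eq_Ioi zero_le_one]
  have haux := aux_main s hs φ hφ n
  -- rewrite first goal integral
  have hgN : (∫ t in Ioc (0 : ℝ) 1, gN l m (n+1) lam t * ((iteratedDeriv (n+1) φ t : ℝ) : ℂ))
      = (∫ x in Ioc (0:ℝ) 1, (x:ℂ)^s * (φ x : ℂ))
        - ∑ r ∈ Finset.range (n+1),
            ((iteratedDeriv r φ 0 : ℝ) : ℂ) / ((r.factorial : ℂ) * (s + (r:ℂ) + 1)) := by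
    rw [← haux]
    congr 1
  -- reindex sum
  have hsum : (∑ r ∈ Finset.Icc 1 (n+1),
        ((iteratedDeriv (r - 1) φ 0 : ℝ) : ℂ) /
          ((Nat.factorial (r - 1) : ℂ) * (s + (r : ℂ))))
      = ∑ r ∈ Finset.range (n+1),
          ((iteratedDeriv r φ 0 : ℝ) : ℂ) / ((r.factorial : ℂ) * (s + (r:ℂ) + 1)) := by
    rw [← Finset.Ico_add_one_right_eq_Icc, Finset.sum_Ico_eq_sum_range]
    apply Finset.sum_congr (by norm_num)
    intro i _
    have h1 : 1 + i - 1 = i := by omega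
    rw [h1]
    push_cast
    ring_nf
  rw [hsplit, hgN, ← hsum]
  ring
end

section
/- Let l > 0 and m ≥ 0 be real numbers and N ≥ 1 an integer, and set g_N(λ,t) = (1/(N-1)!) ∫_t^1 x^{lλ+m} (x-t)^{N-1} dx for 0 < t ≤ 1 and λ ∈ ℂ. Then: (i) for every fixed t ∈ (0,1], the function λ ↦ g_N(λ,t) is an entire function on ℂ; (ii) for every λ ∈ ℂ with Re λ > -(m+N+1)/l, the function t ↦ g_N(λ,t) is integrable on the interval (0,1]. -/
open MeasureTheory Filter Set
open scoped Topology

/-!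
For fixed `t > 0`, `λ ↦ ∫_t^1 x^(lλ+m) (x-t)^(N-1) dx` is the Mellin transform, evaluated at
`lλ + m + 1`, of a function supported in `[t, 1] ⊆ (0, ∞)`; such a Mellin transform is entire.

For integrability in `t`, with `c = lλ + m` the integrand is dominated by `x^(Re c + N - 1)` on
the triangle `0 < t < x ≤ 1`, and by Tonelli
`∫_0^1 ∫_0^x x^(Re c + N - 1) dt dx = ∫_0^1 x^(Re c + N) dx`,
which is finite exactly when `Re λ > -(m + N + 1)/l`. Fubini then makes the inner integral an
integrable function of `t`.
-/

theorem differentiable_mellin_of_support_subset_Icc {E : Type*} [NormedAddCommGroup E]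
    [NormedSpace ℂ E] {f : ℝ → E} {a b : ℝ} (ha : 0 < a) (hf : Integrable f)
    (hsupp : Function.support f ⊆ Icc a b) : Differentiable ℂ (mellin f) := by
  have hzero : ∀ x, (x < a ∨ b < x) → f x = 0 := fun x hx =>
    Function.notMem_support.1 fun h => by
      obtain ⟨h1, h2⟩ := hsupp h
      rcases hx with hx | hx <;> linarith
  intro s
  refine mellin_differentiableAt_of_isBigO_rpow (a := s.re + 1) (b := s.re - 1)
    (hf.locallyIntegrable.locallyIntegrableOn _) ?_ (lt_add_one _) ?_ (sub_one_lt _)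
  · refine EventuallyEq.trans_isBigO ?_ (Asymptotics.isBigO_zero _ _)
    filter_upwards [eventually_gt_atTop b] with x hx using hzero x (Or.inr hx)
  · refine EventuallyEq.trans_isBigO ?_ (Asymptotics.isBigO_zero _ _)
    filter_upwards [Ioo_mem_nhdsGT ha] with x hx using hzero x (Or.inl hx.2)

theorem integral_Ioc_cpow_mul_eq_mellin {g : ℝ → ℂ} {t : ℝ} (ht : 0 ≤ t) (u : ℝ) (c : ℂ) :
    ∫ x in Ioc t u, (x : ℂ) ^ c * g x = mellin ((Ioc t u).indicator g) (c + 1) := by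
  have hsub : Ioc t u ⊆ Ioi 0 := fun x hx => ht.trans_lt hx.1
  rw [mellin, add_sub_cancel_right]
  nth_rw 1 [← inter_eq_right.2 hsub]
  rw [← setIntegral_indicator measurableSet_Ioc]
  simp_rw [indicator_mul_right, smul_eq_mul]

theorem differentiable_gN (l m : ℝ) (N : ℕ) {t : ℝ} (ht : 0 < t) :
    Differentiable ℂ (fun lam => gN l m N lam t) := by
  have hcont : Continuous fun x : ℝ => ((x : ℂ) - t) ^ (N - 1) := by fun_prop
  have hφ : Integrable ((Ioc t 1).indicator fun x : ℝ => ((x : ℂ) - t) ^ (N - 1)) :=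
    hcont.integrableOn_Ioc.integrable_indicator measurableSet_Ioc
  have hM := differentiable_mellin_of_support_subset_Icc ht hφ
    (support_indicator_subset.trans Ioc_subset_Icc_self)
  simp_rw [gN, integral_Ioc_cpow_mul_eq_mellin ht.le]
  exact (hM.comp (by fun_prop)).const_mul _

def unitTriangle : Set (ℝ × ℝ) := {p | 0 < p.1 ∧ p.1 < p.2 ∧ p.2 ≤ 1}

theorem measurableSet_unitTriangle : MeasurableSet unitTriangle := by
  unfold unitTriangle; measurability

theorem integrable_indicator_unitTriangle {h : ℝ → ℝ} (hh : Measurable h)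
    (hint : IntegrableOn (fun x => x * h x) (Ioc 0 1)) :
    Integrable (unitTriangle.indicator fun p => h p.2) (volume.prod volume) := by
  have hsec : ∀ t x, unitTriangle.indicator (fun p => h p.2) (t, x) =
      (Ioo 0 x).indicator (fun _ => (Ioc 0 1).indicator h x) t := by
    intro t x
    simp only [unitTriangle, indicator_apply, mem_ofPred_eq, mem_Ioo, mem_Ioc]
    split_ifs <;> grind
  have hmeas : Measurable (unitTriangle.indicator fun p => h p.2) :=
    (hh.comp measurable_snd).indicator measurableSet_unitTriangle
  rw [integrable_prod_iff' hmeas.aestronglyMeasurable]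
  refine ⟨ae_of_all _ fun x => ?_, ?_⟩
  · simp_rw [hsec]
    exact (integrableOn_const measure_Ioo_lt_top.ne).integrable_indicator measurableSet_Ioo
  · refine ((integrable_indicator_iff measurableSet_Ioc).2 hint.norm).congr
      (ae_of_all _ fun x => ?_)
    simp_rw [hsec, norm_indicator_eq_indicator_norm]
    rw [integral_indicator_const _ measurableSet_Ioo, Real.volume_real_Ioo]
    by_cases hx : x ∈ Ioc 0 1
    · simp [hx, norm_mul, abs_of_pos hx.1, hx.1.le]
    · simp [hx]

theorem integrableOn_integral_Ioc_of_norm_le {E : Type*} [NormedAddCommGroup E] [NormedSpace ℝ E]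
    {F : ℝ → ℝ → E} {h : ℝ → ℝ}
    (hF : AEStronglyMeasurable (Function.uncurry F) (volume.prod volume)) (hh : Measurable h)
    (hFh : ∀ t x, 0 < t → t < x → x ≤ 1 → ‖F t x‖ ≤ h x)
    (hint : IntegrableOn (fun x => x * h x) (Ioc 0 1)) :
    IntegrableOn (fun t => ∫ x in Ioc t 1, F t x) (Ioc 0 1) := by
  have hG : Integrable (unitTriangle.indicator (Function.uncurry F)) (volume.prod volume) := by
    refine (integrable_indicator_unitTriangle hh hint).mono'
      (hF.indicator measurableSet_unitTriangle) (ae_of_all _ fun p => ?_)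
    by_cases hp : p ∈ unitTriangle
    · rw [indicator_of_mem hp, indicator_of_mem hp]
      exact hFh p.1 p.2 hp.1 hp.2.1 hp.2.2
    · rw [indicator_of_notMem hp, indicator_of_notMem hp, norm_zero]
  refine hG.integral_prod_left.integrableOn.congr_fun (fun t ht => ?_) measurableSet_Ioc
  rw [← integral_indicator measurableSet_Ioc]
  refine integral_congr_ae (ae_of_all _ fun x => ?_)
  simp [unitTriangle, indicator_apply, ht.1]

theorem norm_cpow_mul_sub_pow_le {t x : ℝ} (ht : 0 ≤ t) (htx : t < x) (c : ℂ) (n : ℕ) :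
    ‖(x : ℂ) ^ c * ((x : ℂ) - t) ^ n‖ ≤ x ^ (c.re + n) := by
  have hx : 0 < x := ht.trans_lt htx
  rw [norm_mul, norm_pow, Complex.norm_cpow_eq_rpow_re_of_pos hx, Real.rpow_add hx,
    Real.rpow_natCast, ← Complex.ofReal_sub, Complex.norm_real, Real.norm_of_nonneg (by linarith)]
  gcongr
  linarith

theorem integrableOn_gN {l : ℝ} (hl : 0 < l) (m : ℝ) (N : ℕ) {lam : ℂ}
    (hlam : -(m + N + 1) / l < lam.re) :
    IntegrableOn (fun t : ℝ => gN l m N lam t) (Ioc 0 1) := by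
  set s : ℝ := l * lam.re + m + (N - 1 : ℕ)
  have hs : -2 < s := by
    have hN : (N : ℝ) - 1 ≤ ((N - 1 : ℕ) : ℝ) := by rcases N with _ | _ <;> simp
    have hre := (div_lt_iff₀ hl).1 hlam
    linarith
  have hI : IntegrableOn (fun t : ℝ => ∫ x in Ioc t 1,
      (x : ℂ) ^ ((l : ℂ) * lam + m) * ((x : ℂ) - t) ^ (N - 1)) (Ioc 0 1) := by
    refine integrableOn_integral_Ioc_of_norm_le (h := fun x => x ^ s) (by fun_prop) (by fun_prop)
      (fun t x ht htx _ => ?_) ?_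
    · simpa using norm_cpow_mul_sub_pow_le ht.le htx (l * lam + m) (N - 1)
    · refine (intervalIntegral.intervalIntegrable_rpow' (r := s + 1) (by linarith)).1.congr_fun
        (fun x hx => ?_) measurableSet_Ioc
      exact (Real.rpow_add_one hx.1.ne' s).trans (mul_comm _ _)
  exact Integrable.const_mul hI _

theorem stmt_2_general (l m : ℝ) (hl : 0 < l) (N : ℕ) :
    (∀ t ∈ Ioc (0 : ℝ) 1, Differentiable ℂ (fun lam : ℂ => gN l m N lam t)) ∧
    (∀ lam : ℂ, -(m + (N : ℝ) + 1) / l < lam.re →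
      IntegrableOn (fun t : ℝ => gN l m N lam t) (Ioc 0 1)) :=
  ⟨fun _ ht => differentiable_gN l m N ht.1, fun _ hlam => integrableOn_gN hl m N hlam⟩

/-- For `l > 0`, `m ≥ 0` and `N ≥ 1`:
(i) for every fixed `t ∈ (0,1]`, `λ ↦ g_N(λ,t)` is an entire function on `ℂ`;
(ii) for every `λ` with `Re λ > -(m+N+1)/l`, `t ↦ g_N(λ,t)` is integrable on `(0,1]`. -/
theorem stmt_2 (l m : ℝ) (hl : 0 < l) (hm : 0 ≤ m) (N : ℕ) (hN : 1 ≤ N) :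
    (∀ t ∈ Ioc (0 : ℝ) 1, Differentiable ℂ (fun lam : ℂ => gN l m N lam t)) ∧
    (∀ lam : ℂ, -(m + (N : ℝ) + 1) / l < lam.re →
      IntegrableOn (fun t : ℝ => gN l m N lam t) (Ioc 0 1)) :=
  stmt_2_general l m hl N
end

section
/- Let l > 0 and m ≥ 0 be real numbers and let φ : ℝ → ℝ be a smooth compactly supported function. Then the holomorphic function F₋(φ)(λ) = ∫_{-∞}^{0} |x|^{lλ+m} φ(x) dx, defined for Re λ > -(m+1)/l, extends to a meromorphic function on all of ℂ having at most simple poles, all contained in the set { -(m+r)/l : r ∈ ℤ, r ≥ 1 }, and for each integer r ≥ 1 the residue of this meromorphic extension at λ = -(m+r)/l equals (-1)^{r-1} φ^{(r-1)}(0) / ((r-1)! · l). -/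
open MeasureTheory Filter Set
open scoped Topology ContDiff

/-- `F₋(φ)(λ) = ∫_{-∞}^0 |x|^(lλ+m) φ(x) dx`. -/
noncomputable def Fminus (l m : ℝ) (φ : ℝ → ℝ) (lam : ℂ) : ℂ :=
  ∫ x in Iio (0 : ℝ), ((|x| : ℝ) : ℂ) ^ ((l : ℂ) * lam + (m : ℂ)) * (φ x : ℂ)

namespace Stmt4Aux

open Complex Asymptotics

lemma eventually_zero_atTop {g : ℝ → ℝ} (hgc : HasCompactSupport g) :
    ∀ᶠ x : ℝ in atTop, g x = 0 := by
  obtain ⟨A, hA⟩ := hgc.isCompact.isBounded.subset_closedBall 0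
  filter_upwards [eventually_gt_atTop (max A 0)] with x hx
  have hx' : x ∉ tsupport g := by
    intro hmem
    have h1 : |x| ≤ A := by
      have := hA hmem
      rwa [Metric.mem_closedBall, Real.dist_eq, sub_zero] at this
    have hxpos : 0 < x := lt_of_le_of_lt (le_max_right A 0) hx
    rw [abs_of_pos hxpos] at h1
    exact absurd (lt_of_le_of_lt (le_max_left A 0) hx) (not_lt.mpr h1)
  exact image_eq_zero_of_notMem_tsupport hx'

lemma bigO_top {g : ℝ → ℝ} (hgc : HasCompactSupport g) (a : ℝ) :
    (fun x : ℝ => ((g x : ℝ) : ℂ)) =O[atTop] (fun x : ℝ => x ^ (-a)) := by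
  have h0 : (fun x : ℝ => ((g x : ℝ) : ℂ)) =ᶠ[atTop] (fun _ => (0 : ℂ)) := by
    filter_upwards [eventually_zero_atTop hgc] with x hx
    simp [hx]
  exact h0.trans_isBigO (isBigO_zero _ _)

lemma bigO_bot {g : ℝ → ℝ} (hg : Continuous g) :
    (fun x : ℝ => ((g x : ℝ) : ℂ)) =O[𝓝[>] (0:ℝ)] (fun x : ℝ => x ^ (-(0:ℝ))) := by
  have h1 : Tendsto (fun x : ℝ => ((g x : ℝ) : ℂ)) (𝓝[>] (0:ℝ)) (𝓝 ((g 0 : ℝ) : ℂ)) :=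
    ((Complex.continuous_ofReal.comp hg).tendsto 0).mono_left nhdsWithin_le_nhds
  have h2 := h1.isBigO_one (F := ℝ)
  have h3 : (fun x : ℝ => x ^ (-(0:ℝ))) = (fun _ : ℝ => (1:ℝ)) := by
    funext x; rw [neg_zero, Real.rpow_zero]
  rw [h3]; exact h2

lemma mellin_conv {g : ℝ → ℝ} (hg : Continuous g) (hgc : HasCompactSupport g) {s : ℂ}
    (hs : 0 < s.re) : MellinConvergent (fun x => ((g x : ℝ) : ℂ)) s :=
  mellinConvergent_of_isBigO_rpow
    ((Complex.continuous_ofReal.comp hg).locallyIntegrable.locallyIntegrableOn _)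
    (bigO_top hgc (s.re + 1)) (by linarith) (bigO_bot hg) hs

lemma mellin_diff {g : ℝ → ℝ} (hg : Continuous g) (hgc : HasCompactSupport g) {s : ℂ}
    (hs : 0 < s.re) : DifferentiableAt ℂ (mellin (fun x => ((g x : ℝ) : ℂ))) s :=
  mellin_differentiableAt_of_isBigO_rpow
    ((Complex.continuous_ofReal.comp hg).locallyIntegrable.locallyIntegrableOn _)
    (bigO_top hgc (s.re + 1)) (by linarith) (bigO_bot hg) hs

/-- Integration by parts for the Mellin transform of a smooth compactly supported function. -/
lemma mellin_ibp {g : ℝ → ℝ} (hg : ContDiff ℝ ∞ g) (hgc : HasCompactSupport g) {s : ℂ}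
    (hs : 0 < s.re) :
    mellin (fun x => ((deriv g x : ℝ) : ℂ)) (s + 1) = -s * mellin (fun x => ((g x : ℝ) : ℂ)) s := by
  have hg1 : Differentiable ℝ g := hg.differentiable (by simp)
  have hgd : ContDiff ℝ ∞ (deriv g) := (contDiff_infty_iff_deriv.mp hg).2
  have hgdc : HasCompactSupport (deriv g) := hgc.deriv
  have hsne : s ≠ 0 := by intro h; rw [h] at hs; simp at hs
  have i1 : IntegrableOn (fun x : ℝ => s * ((x:ℂ) ^ (s-1) * ((g x : ℝ):ℂ))) (Ioi (0:ℝ)) := by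
    have h := (mellin_conv hg.continuous hgc hs).const_mul s
    simpa [smul_eq_mul, mul_assoc, IntegrableOn] using h
  have i2 : IntegrableOn (fun x : ℝ => (x:ℂ) ^ s * ((deriv g x : ℝ):ℂ)) (Ioi (0:ℝ)) := by
    have h : IntegrableOn (fun t : ℝ => (t:ℂ) ^ (s + 1 - 1) • ((deriv g t : ℝ):ℂ)) (Ioi (0:ℝ)) :=
      mellin_conv hgd.continuous hgdc (s := s + 1) (by simp; linarith)
    simpa [smul_eq_mul, add_sub_cancel_right] using h
  have key : (∫ x in Ioi (0:ℝ),
      (s * ((x:ℂ) ^ (s-1) * ((g x : ℝ):ℂ)) + (x:ℂ) ^ s * ((deriv g x : ℝ):ℂ)))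
      = 0 - (((0:ℝ):ℂ) ^ s * ((g 0 : ℝ):ℂ)) := by
    apply integral_Ioi_of_hasDerivAt_of_tendsto
      (f := fun x : ℝ => (x:ℂ) ^ s * ((g x : ℝ):ℂ))
    · exact ((continuousAt_ofReal_cpow_const 0 s (Or.inl hs)).mul
        ((Complex.continuous_ofReal.comp hg.continuous).continuousAt)).continuousWithinAt
    · intro x hx
      have hx0 : (0:ℝ) < x := hx
      have h2 : HasDerivAt (fun y : ℝ => ((y:ℝ):ℂ) ^ s) (s * ((x:ℝ):ℂ) ^ (s-1)) x :=
        ((Complex.hasStrictDerivAt_cpow_const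
          (ofReal_mem_slitPlane.2 hx0)).hasDerivAt).comp_ofReal
      have h3 : HasDerivAt (fun y : ℝ => ((g y : ℝ):ℂ)) ((deriv g x : ℝ):ℂ) x :=
        ((hg1 x).hasDerivAt).ofReal_comp
      have h4 := h2.fun_mul h3
      exact h4.congr_deriv (by ring)
    · exact i1.add i2
    · have h0 : (fun x : ℝ => (x:ℂ) ^ s * ((g x : ℝ):ℂ)) =ᶠ[atTop] (fun _ => (0:ℂ)) := by
        filter_upwards [eventually_zero_atTop hgc] with x hx
        simp [hx]
      exact Tendsto.congr' h0.symm tendsto_const_nhds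
  have h0s : ((0:ℝ):ℂ) ^ s = 0 := by
    rw [Complex.ofReal_zero, Complex.zero_cpow hsne]
  rw [h0s, zero_mul, sub_zero, integral_add i1 i2, integral_const_mul] at key
  simp only [mellin, smul_eq_mul, add_sub_cancel_right]
  linear_combination key

/-- The meromorphic continuation, at level `N`. -/
noncomputable def G (l m : ℝ) (φ : ℝ → ℝ) (N : ℕ) : ℂ → ℂ := fun z =>
  (-1)^N * (∏ j ∈ Finset.range N, ((l:ℂ) * z + m + j + 1))⁻¹ *
    mellin (fun x => ((iteratedDeriv N (fun y => φ (-y)) x : ℝ) : ℂ)) ((l:ℂ) * z + m + N + 1)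

/-- The global function: choose the level depending on the real part. -/
noncomputable def Fc (l m : ℝ) (φ : ℝ → ℝ) : ℂ → ℂ := fun z =>
  G l m φ (⌊-(l * z.re + m)⌋₊ + 1) z

lemma re_aux (l m : ℝ) (N : ℕ) (z : ℂ) :
    ((l:ℂ) * z + m + N + 1).re = l * z.re + m + N + 1 := by
  simp [Complex.add_re, Complex.mul_re]

lemma psi_contDiff {φ : ℝ → ℝ} (hφ : ContDiff ℝ (⊤ : ℕ∞) φ) :
    ContDiff ℝ ∞ (fun y : ℝ => φ (-y)) :=
  (hφ.of_le (by simp)).comp contDiff_neg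

lemma psi_supp {φ : ℝ → ℝ} (hφc : HasCompactSupport φ) :
    HasCompactSupport (fun y : ℝ => φ (-y)) :=
  hφc.comp_homeomorph (Homeomorph.neg ℝ)

lemma itd_contDiff {φ : ℝ → ℝ} (hφ : ContDiff ℝ (⊤ : ℕ∞) φ) (N : ℕ) :
    ContDiff ℝ ∞ (iteratedDeriv N (fun y : ℝ => φ (-y))) := by
  rw [iteratedDeriv_eq_iterate]
  exact ContDiff.iterate_deriv N (psi_contDiff hφ)

lemma itd_supp {φ : ℝ → ℝ} (hφc : HasCompactSupport φ) (N : ℕ) :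
    HasCompactSupport (iteratedDeriv N (fun y : ℝ => φ (-y))) := by
  induction N with
  | zero => simpa [iteratedDeriv_zero] using psi_supp hφc
  | succ n ih => rw [iteratedDeriv_succ]; exact ih.deriv

lemma G_succ (l m : ℝ) (φ : ℝ → ℝ) (hφ : ContDiff ℝ (⊤ : ℕ∞) φ) (hφc : HasCompactSupport φ)
    {N : ℕ} {z : ℂ} (h : 0 < l * z.re + m + N + 1) :
    G l m φ (N + 1) z = G l m φ N z := by
  have hs' : 0 < ((l:ℂ) * z + m + N + 1).re := by rw [re_aux]; exact h
  have hs'ne : (l:ℂ) * z + m + N + 1 ≠ 0 := by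
    intro hc; rw [hc] at hs'; simp at hs'
  have ibp := mellin_ibp (itd_contDiff hφ N) (itd_supp hφc N) hs'
  have hder : (fun x => ((deriv (iteratedDeriv N (fun y : ℝ => φ (-y))) x : ℝ):ℂ))
      = fun x => ((iteratedDeriv (N+1) (fun y : ℝ => φ (-y)) x : ℝ):ℂ) := by
    funext x; rw [← iteratedDeriv_succ]
  rw [hder] at ibp
  show (-1)^(N+1) * (∏ j ∈ Finset.range (N+1), ((l:ℂ) * z + m + j + 1))⁻¹ *
      mellin (fun x => ((iteratedDeriv (N+1) (fun y : ℝ => φ (-y)) x : ℝ):ℂ))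
        ((l:ℂ) * z + m + ((N+1:ℕ):ℂ) + 1)
      = (-1)^N * (∏ j ∈ Finset.range N, ((l:ℂ) * z + m + j + 1))⁻¹ *
      mellin (fun x => ((iteratedDeriv N (fun y : ℝ => φ (-y)) x : ℝ):ℂ))
        ((l:ℂ) * z + m + (N:ℂ) + 1)
  have harg : (l:ℂ) * z + m + ((N+1:ℕ):ℂ) + 1 = ((l:ℂ) * z + m + N + 1) + 1 := by
    push_cast; ring
  rw [harg, Finset.prod_range_succ, ibp, mul_inv]
  have e1 : (-1:ℂ)^(N+1) * ((∏ j ∈ Finset.range N, ((l:ℂ) * z + m + j + 1))⁻¹ *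
        ((l:ℂ) * z + m + N + 1)⁻¹) *
      (-((l:ℂ) * z + m + N + 1) *
        mellin (fun x => ((iteratedDeriv N (fun y : ℝ => φ (-y)) x : ℝ):ℂ))
          ((l:ℂ) * z + m + (N:ℂ) + 1))
      = (-1:ℂ)^N * (∏ j ∈ Finset.range N, ((l:ℂ) * z + m + j + 1))⁻¹ *
        mellin (fun x => ((iteratedDeriv N (fun y : ℝ => φ (-y)) x : ℝ):ℂ))
          ((l:ℂ) * z + m + (N:ℂ) + 1) *
        (((l:ℂ) * z + m + N + 1)⁻¹ * ((l:ℂ) * z + m + N + 1)) := by ring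
  rw [e1, inv_mul_cancel₀ hs'ne, mul_one]

lemma G_eq_of_le (l m : ℝ) (φ : ℝ → ℝ) (hφ : ContDiff ℝ (⊤ : ℕ∞) φ) (hφc : HasCompactSupport φ)
    {N N' : ℕ} (hle : N ≤ N') {z : ℂ} (h : 0 < l * z.re + m + N + 1) :
    G l m φ N z = G l m φ N' z := by
  induction N' , hle using Nat.le_induction with
  | base => rfl
  | succ M hM ih =>
    have h' : 0 < l * z.re + m + M + 1 := by
      have : (N:ℝ) ≤ M := by exact_mod_cast hM
      linarith
    rw [ih, G_succ l m φ hφ hφc h']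

lemma floor_dom (l m : ℝ) (z : ℂ) :
    0 < l * z.re + m + ((⌊-(l * z.re + m)⌋₊ + 1 : ℕ) : ℝ) + 1 := by
  have h := Nat.lt_floor_add_one (-(l * z.re + m))
  push_cast
  linarith

lemma Fc_eq (l m : ℝ) (φ : ℝ → ℝ) (hφ : ContDiff ℝ (⊤ : ℕ∞) φ) (hφc : HasCompactSupport φ)
    {N : ℕ} {z : ℂ} (h : 0 < l * z.re + m + N + 1) :
    Fc l m φ z = G l m φ N z := by
  have h2 := floor_dom l m z
  exact (G_eq_of_le l m φ hφ hφc (le_max_left _ N) h2).trans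
    (G_eq_of_le l m φ hφ hφc (le_max_right (⌊-(l * z.re + m)⌋₊ + 1) N) h).symm

lemma G_mellin_diff (l m : ℝ) (φ : ℝ → ℝ) (hφ : ContDiff ℝ (⊤ : ℕ∞) φ) (hφc : HasCompactSupport φ)
    (N : ℕ) {z : ℂ} (h : 0 < l * z.re + m + N + 1) :
    DifferentiableAt ℂ (fun w : ℂ =>
      mellin (fun x => ((iteratedDeriv N (fun y : ℝ => φ (-y)) x : ℝ):ℂ))
        ((l:ℂ) * w + m + N + 1)) z := by
  have hm := mellin_diff (itd_contDiff hφ N).continuous (itd_supp hφc N)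
    (s := (l:ℂ) * z + m + N + 1) (by rw [re_aux]; exact h)
  have hin : DifferentiableAt ℂ (fun w : ℂ => (l:ℂ) * w + m + N + 1) z := by
    apply DifferentiableAt.add_const
    apply DifferentiableAt.add_const
    apply DifferentiableAt.add_const
    exact differentiableAt_id.const_mul _
  exact DifferentiableAt.comp (g := mellin (fun x => ((iteratedDeriv N (fun y : ℝ => φ (-y)) x : ℝ):ℂ))) z hm hin

lemma prod_range_sub_nat (n : ℕ) : ∏ j ∈ Finset.range n, (n - j) = n.factorial := by
  calc ∏ j ∈ Finset.range n, (n - j)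
      = ∏ j ∈ Finset.range n, ((fun j => j + 1) (n - 1 - j)) := by
        refine Finset.prod_congr rfl fun j hj => ?_
        have := Finset.mem_range.mp hj
        show n - j = n - 1 - j + 1
        omega
    _ = ∏ j ∈ Finset.range n, (j + 1) := Finset.prod_range_reflect _ n
    _ = n.factorial := Finset.prod_range_add_one_eq_factorial n

lemma prod_shift_eval (n : ℕ) :
    ∏ j ∈ Finset.range n, ((j:ℂ) - n) = (-1)^n * n.factorial := by
  have h1 : ∀ j ∈ Finset.range n, (j:ℂ) - n = -(((n - j : ℕ) : ℂ)) := by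
    intro j hj
    have hj' : j < n := Finset.mem_range.mp hj
    push_cast [Nat.cast_sub hj'.le]
    ring
  have h2 : ∀ j ∈ Finset.range n, -(((n - j : ℕ) : ℂ)) = (-1) * ((n - j : ℕ) : ℂ) :=
    fun j _ => by ring
  rw [Finset.prod_congr rfl h1, Finset.prod_congr rfl h2, Finset.prod_mul_distrib,
    Finset.prod_const, Finset.card_range, ← Nat.cast_prod, prod_range_sub_nat]

lemma resid_algebra {a li q mm : ℂ} (ha : a ≠ 0) (c : ℂ) :
    a * (c * (q * (li * a))⁻¹ * mm) = c * li⁻¹ * q⁻¹ * mm := by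
  rw [mul_inv, mul_inv]
  have h : a * a⁻¹ = 1 := mul_inv_cancel₀ ha
  calc a * (c * (q⁻¹ * (li⁻¹ * a⁻¹)) * mm)
      = c * li⁻¹ * q⁻¹ * mm * (a * a⁻¹) := by ring
    _ = c * li⁻¹ * q⁻¹ * mm := by rw [h, mul_one]

end Stmt4Aux

open Stmt4Aux

/-- For `l > 0`, `m ≥ 0` and `φ` smooth compactly supported, the function `F₋(φ)`, holomorphic
for `Re λ > -(m+1)/l`, extends to a meromorphic function on `ℂ` having at most simple poles,
all contained in `{-(m+r)/l : r ∈ ℤ, r ≥ 1}`, and for each integer `r ≥ 1` the residue of this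
extension at `λ = -(m+r)/l` equals `(-1)^(r-1) φ^(r-1)(0)/((r-1)!·l)`. -/
theorem stmt_4 (l m : ℝ) (hl : 0 < l) (hm : 0 ≤ m) (φ : ℝ → ℝ)
    (hφ : ContDiff ℝ (⊤ : ℕ∞) φ) (hφc : HasCompactSupport φ) :
    ∃ F : ℂ → ℂ,
      (∀ lam : ℂ, -(m + 1) / l < lam.re → F lam = Fminus l m φ lam) ∧
      (∀ lam : ℂ, (¬ ∃ r : ℕ, 1 ≤ r ∧ lam = ((-((m + (r : ℝ)) / l) : ℝ) : ℂ)) →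
        AnalyticAt ℂ F lam) ∧
      (∀ r : ℕ, 1 ≤ r →
        Tendsto (fun lam : ℂ => (lam - ((-((m + (r : ℝ)) / l) : ℝ) : ℂ)) * F lam)
          (𝓝[≠] ((-((m + (r : ℝ)) / l) : ℝ) : ℂ))
          (𝓝 (((-1 : ℝ) ^ (r - 1) * iteratedDeriv (r - 1) φ 0 /
            ((Nat.factorial (r - 1) : ℝ) * l) : ℝ) : ℂ))) := by
  have hlne : (l:ℂ) ≠ 0 := Complex.ofReal_ne_zero.2 hl.ne'
  refine ⟨Fc l m φ, ?_, ?_, ?_⟩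
  · -- agreement with Fminus on the half-plane
    intro lam hlam
    have h0 : 0 < l * lam.re + m + ((0:ℕ):ℝ) + 1 := by
      have h := (div_lt_iff₀ hl).mp hlam
      push_cast
      nlinarith
    rw [Fc_eq l m φ hφ hφc h0]
    show (-1)^(0:ℕ) * (∏ j ∈ Finset.range 0, ((l:ℂ) * lam + m + j + 1))⁻¹ *
        mellin (fun x => ((iteratedDeriv 0 (fun y : ℝ => φ (-y)) x : ℝ):ℂ))
          ((l:ℂ) * lam + m + ((0:ℕ):ℂ) + 1) = Fminus l m φ lam
    simp only [pow_zero, Finset.range_zero, Finset.prod_empty, inv_one, one_mul,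
      iteratedDeriv_zero, Nat.cast_zero, add_zero]
    rw [mellin]
    have hsub : (l:ℂ) * lam + m + 1 - 1 = (l:ℂ) * lam + m := by ring
    rw [hsub]
    have step1 : (∫ t in Ioi (0:ℝ), ((t:ℝ):ℂ) ^ ((l:ℂ) * lam + (m:ℂ)) • ((φ (-t) : ℝ):ℂ))
        = ∫ t in Ioi (0:ℝ), ((|(-t)| : ℝ):ℂ) ^ ((l:ℂ) * lam + (m:ℂ)) * ((φ (-t) : ℝ):ℂ) := by
      refine setIntegral_congr_fun measurableSet_Ioi fun x hx => ?_
      have hx0 : (0:ℝ) < x := hx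
      rw [smul_eq_mul, abs_neg, abs_of_pos hx0]
    rw [step1]
    have hcomp := integral_comp_neg_Ioi (0:ℝ)
      (fun x : ℝ => ((|x| : ℝ) : ℂ) ^ ((l : ℂ) * lam + (m : ℂ)) * ((φ x : ℝ) : ℂ))
    rw [hcomp, neg_zero, MeasureTheory.integral_Iic_eq_integral_Iio]
    rfl
  · -- analyticity away from the poles
    intro lam hlam
    have hdom : 0 < l * lam.re + m + ((⌊-(l * lam.re + m)⌋₊ + 1 : ℕ) : ℝ) + 1 :=
      floor_dom l m lam
    set n : ℕ := ⌊-(l * lam.re + m)⌋₊ + 1 with hn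
    have hVopen : IsOpen {w : ℂ | 0 < l * w.re + m + (n:ℝ) + 1} :=
      isOpen_lt continuous_const (by fun_prop)
    have hUopen : IsOpen ({w : ℂ | 0 < l * w.re + m + (n:ℝ) + 1} ∩
        ⋂ j ∈ Finset.range n, {w : ℂ | (l:ℂ) * w + m + j + 1 ≠ 0}) := by
      apply hVopen.inter
      apply isOpen_biInter_finset
      intro j _
      have he : {w : ℂ | (l:ℂ) * w + m + j + 1 ≠ 0}
          = (fun w : ℂ => (l:ℂ) * w + m + j + 1) ⁻¹' ({0}ᶜ) := rfl
      rw [he]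
      exact IsOpen.preimage (by fun_prop) isOpen_compl_singleton
    have hlamU : lam ∈ ({w : ℂ | 0 < l * w.re + m + (n:ℝ) + 1} ∩
        ⋂ j ∈ Finset.range n, {w : ℂ | (l:ℂ) * w + m + j + 1 ≠ 0}) := by
      refine ⟨hdom, ?_⟩
      simp only [Set.mem_iInter, Set.mem_setOf_eq]
      intro j _ heq
      refine hlam ⟨j + 1, le_add_self, ?_⟩
      have hcast : ((-((m + ((j+1:ℕ):ℝ)) / l) : ℝ) : ℂ) = -((m:ℂ) + j + 1) / l := by
        push_cast; ring
      rw [hcast, eq_div_iff hlne]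
      linear_combination heq
    have hdiff : DifferentiableOn ℂ (G l m φ n)
        ({w : ℂ | 0 < l * w.re + m + (n:ℝ) + 1} ∩
          ⋂ j ∈ Finset.range n, {w : ℂ | (l:ℂ) * w + m + j + 1 ≠ 0}) := by
      intro w hw
      obtain ⟨hw1, hw2⟩ := hw
      simp only [Set.mem_iInter, Set.mem_setOf_eq] at hw2
      apply DifferentiableAt.differentiableWithinAt
      have hP : DifferentiableAt ℂ
          (fun w : ℂ => ∏ j ∈ Finset.range n, ((l:ℂ) * w + m + j + 1)) w := by
        apply DifferentiableAt.fun_finsetProd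
        intro j _
        apply DifferentiableAt.add_const
        apply DifferentiableAt.add_const
        apply DifferentiableAt.add_const
        exact differentiableAt_id.const_mul _
      have hPne : (∏ j ∈ Finset.range n, ((l:ℂ) * w + m + j + 1)) ≠ 0 :=
        Finset.prod_ne_zero_iff.mpr fun j hj => hw2 j hj
      exact ((differentiableAt_const _).mul (hP.inv hPne)).mul
        (G_mellin_diff l m φ hφ hφc n hw1)
    have hGanalytic : AnalyticAt ℂ (G l m φ n) lam :=
      hdiff.analyticAt (hUopen.mem_nhds hlamU)
    apply hGanalytic.congr
    filter_upwards [hVopen.mem_nhds hdom] with w hw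
    exact (Fc_eq l m φ hφ hφc hw).symm
  · -- residues
    intro r hr
    obtain ⟨n, rfl⟩ : ∃ n, r = n + 1 := ⟨r - 1, by omega⟩
    simp only [Nat.add_sub_cancel]
    set lam0 : ℂ := ((-((m + ((n+1:ℕ):ℝ)) / l) : ℝ) : ℂ) with hlam0
    have hs0 : (l:ℂ) * lam0 + m = -((n:ℂ) + 1) := by
      rw [hlam0]
      push_cast
      field_simp
      ring
    have hre0 : lam0.re = -((m + ((n+1:ℕ):ℝ)) / l) := by
      rw [hlam0, Complex.ofReal_re]
    have hdom : 0 < l * lam0.re + m + ((n+1:ℕ):ℝ) + 1 := by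
      rw [hre0]
      have h1 : l * (-((m + ((n+1:ℕ):ℝ)) / l)) = -(m + ((n+1:ℕ):ℝ)) := by
        field_simp
      rw [h1]
      push_cast
      ring_nf
      norm_num
    have hMdiff : DifferentiableAt ℂ (fun w : ℂ =>
        mellin (fun x => ((iteratedDeriv (n+1) (fun y : ℝ => φ (-y)) x : ℝ):ℂ))
          ((l:ℂ) * w + m + ((n+1:ℕ):ℂ) + 1)) lam0 :=
      G_mellin_diff l m φ hφ hφc (n+1) hdom
    have hPdiff : DifferentiableAt ℂ
        (fun w : ℂ => ∏ j ∈ Finset.range n, ((l:ℂ) * w + m + j + 1)) lam0 := by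
      apply DifferentiableAt.fun_finsetProd
      intro j _
      apply DifferentiableAt.add_const
      apply DifferentiableAt.add_const
      apply DifferentiableAt.add_const
      exact differentiableAt_id.const_mul _
    have hPval : (∏ j ∈ Finset.range n, ((l:ℂ) * lam0 + m + j + 1))
        = (-1)^n * n.factorial := by
      have h1 : ∀ j ∈ Finset.range n, (l:ℂ) * lam0 + m + j + 1 = (j:ℂ) - n := by
        intro j _
        linear_combination hs0
      rw [Finset.prod_congr rfl h1, prod_shift_eval]
    have hPne : (∏ j ∈ Finset.range n, ((l:ℂ) * lam0 + m + j + 1)) ≠ 0 := by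
      rw [hPval]
      exact mul_ne_zero (pow_ne_zero _ (by norm_num)) (Nat.cast_ne_zero.2 n.factorial_ne_zero)
    have hKcont : ContinuousAt (fun w : ℂ =>
        (-1)^(n+1) * (l:ℂ)⁻¹ * (∏ j ∈ Finset.range n, ((l:ℂ) * w + m + j + 1))⁻¹ *
          mellin (fun x => ((iteratedDeriv (n+1) (fun y : ℝ => φ (-y)) x : ℝ):ℂ))
            ((l:ℂ) * w + m + ((n+1:ℕ):ℂ) + 1)) lam0 :=
      (continuousAt_const.mul (hPdiff.continuousAt.inv₀ hPne)).mul hMdiff.continuousAt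
    have hftc : (∫ t in Ioi (0:ℝ), iteratedDeriv (n+1) (fun y : ℝ => φ (-y)) t)
        = -(iteratedDeriv n (fun y : ℝ => φ (-y)) 0) := by
      have hsucc : iteratedDeriv (n+1) (fun y : ℝ => φ (-y))
          = deriv (iteratedDeriv n (fun y : ℝ => φ (-y))) := iteratedDeriv_succ
      rw [hsucc]
      exact HasCompactSupport.integral_Ioi_deriv_eq
        ((itd_contDiff hφ n).of_le (by exact_mod_cast le_top)) (itd_supp hφc n) 0
    have hcn : iteratedDeriv n (fun y : ℝ => φ (-y)) 0 = (-1:ℝ)^n * iteratedDeriv n φ 0 := by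
      simpa [smul_eq_mul] using iteratedDeriv_comp_neg n φ 0
    have hMval : mellin (fun x => ((iteratedDeriv (n+1) (fun y : ℝ => φ (-y)) x : ℝ):ℂ))
        ((l:ℂ) * lam0 + m + ((n+1:ℕ):ℂ) + 1)
        = ((-((-1:ℝ)^n * iteratedDeriv n φ 0) : ℝ) : ℂ) := by
      have harg : (l:ℂ) * lam0 + m + ((n+1:ℕ):ℂ) + 1 = 1 := by
        push_cast
        linear_combination hs0
      rw [harg, mellin]
      simp only [sub_self, Complex.cpow_zero, one_smul]
      have hio : (∫ t in Ioi (0:ℝ), ((iteratedDeriv (n+1) (fun y : ℝ => φ (-y)) t : ℝ):ℂ))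
          = ((∫ t in Ioi (0:ℝ), iteratedDeriv (n+1) (fun y : ℝ => φ (-y)) t : ℝ) : ℂ) :=
        integral_ofReal
      rw [hio, hftc, hcn]
    have hVopen : IsOpen {w : ℂ | 0 < l * w.re + m + ((n+1:ℕ):ℝ) + 1} :=
      isOpen_lt continuous_const (by fun_prop)
    have hEq : (fun w : ℂ => (w - lam0) * Fc l m φ w) =ᶠ[𝓝[≠] lam0]
        (fun w : ℂ =>
          (-1)^(n+1) * (l:ℂ)⁻¹ * (∏ j ∈ Finset.range n, ((l:ℂ) * w + m + j + 1))⁻¹ *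
          mellin (fun x => ((iteratedDeriv (n+1) (fun y : ℝ => φ (-y)) x : ℝ):ℂ))
            ((l:ℂ) * w + m + ((n+1:ℕ):ℂ) + 1)) := by
      filter_upwards [self_mem_nhdsWithin,
        mem_nhdsWithin_of_mem_nhds (hVopen.mem_nhds hdom)] with w hw1 hw2
      have hwne : w - lam0 ≠ 0 := sub_ne_zero.2 hw1
      have hw2' : 0 < l * w.re + m + ((n+1:ℕ):ℝ) + 1 := hw2
      rw [Fc_eq l m φ hφ hφc hw2']
      show (w - lam0) * ((-1)^(n+1) *
          (∏ j ∈ Finset.range (n+1), ((l:ℂ) * w + m + j + 1))⁻¹ *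
          mellin (fun x => ((iteratedDeriv (n+1) (fun y : ℝ => φ (-y)) x : ℝ):ℂ))
            ((l:ℂ) * w + m + ((n+1:ℕ):ℂ) + 1)) = _
      rw [Finset.prod_range_succ]
      have hfac : (l:ℂ) * w + m + (n:ℂ) + 1 = (l:ℂ) * (w - lam0) := by
        have h2 : (l:ℂ) * lam0 = -((n:ℂ) + 1) - m := by linear_combination hs0
        rw [mul_sub, h2]; ring
      rw [hfac]
      exact resid_algebra hwne _
    have hlim : Tendsto (fun w : ℂ =>
        (-1)^(n+1) * (l:ℂ)⁻¹ * (∏ j ∈ Finset.range n, ((l:ℂ) * w + m + j + 1))⁻¹ *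
          mellin (fun x => ((iteratedDeriv (n+1) (fun y : ℝ => φ (-y)) x : ℝ):ℂ))
            ((l:ℂ) * w + m + ((n+1:ℕ):ℂ) + 1)) (𝓝[≠] lam0)
        (𝓝 ((-1)^(n+1) * (l:ℂ)⁻¹ *
          (∏ j ∈ Finset.range n, ((l:ℂ) * lam0 + m + j + 1))⁻¹ *
          mellin (fun x => ((iteratedDeriv (n+1) (fun y : ℝ => φ (-y)) x : ℝ):ℂ))
            ((l:ℂ) * lam0 + m + ((n+1:ℕ):ℂ) + 1))) :=
      hKcont.tendsto.mono_left nhdsWithin_le_nhds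
    have hKval : (-1:ℂ)^(n+1) * (l:ℂ)⁻¹ *
        (∏ j ∈ Finset.range n, ((l:ℂ) * lam0 + m + j + 1))⁻¹ *
        mellin (fun x => ((iteratedDeriv (n+1) (fun y : ℝ => φ (-y)) x : ℝ):ℂ))
          ((l:ℂ) * lam0 + m + ((n+1:ℕ):ℂ) + 1)
        = (((-1:ℝ)^n * iteratedDeriv n φ 0 / ((n.factorial:ℝ) * l) : ℝ) : ℂ) := by
      rw [hPval, hMval]
      have hfact : ((n.factorial:ℂ)) ≠ 0 := Nat.cast_ne_zero.2 n.factorial_ne_zero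
      push_cast
      field_simp
      ring
    rw [hKval] at hlim
    exact Tendsto.congr' hEq.symm hlim
end
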